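/- arXiv:2311.14240 — 8 statements merged into one kernel-verified Lean document; each statement's English description precedes it below -/
import Mathlib

section
/- Let q be a prime power with q ≡ 1 (mod 4), d = (q-1)/4, and g a generator of F_q^*. For any integer i with 0 ≤ i ≤ d-1, set a₀ = (g^(2(4i+2)) + 1)/(2g^(4i+2)), a₁ = (g^d + 1)(g^(2(4i+2)) - 1)/(4g^(4i+d+2)), and a₂ = g^d · a₁. Then the polynomial f(x) = a₂x^(3d+1) + a₁x^(d+1) + a₀x induces a bijection of F_q satisfying f(f(x)) = x for all x ∈ F_q. -/
/-!
Write `s = g ^ d`, a square root of `-1`, and `w = g ^ (4i + 2)`, so that `w ^ d = s ^ 2 = -1`.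
Then `f x = h (x ^ d) * x` with `h t = s a₁ t³ + a₁ t + a₀`, and `x ^ d` is a fourth root of
unity `±1` or `±s`. The coefficients are chosen so that `h = w` at `1, s` and `h = w⁻¹` at
`-1, -s`. Multiplication by `w` or `w⁻¹` changes the sign of `x ^ d`, so `f` multiplies by `w`
and then by `w⁻¹` (or the other way round), and `f ∘ f = id`.
-/

section
variable {K : Type*} [Field K]

theorem eq_or_eq_neg_of_pow_four_eq_one {s t : K} (hs : s ^ 2 = -1) (ht : t ^ 4 = 1) :
    t = 1 ∨ t = -1 ∨ t = s ∨ t = -s := by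
  have hprod : (t - 1) * (t + 1) * (t - s) * (t + s) = 0 := by
    linear_combination ht + (1 - t ^ 2) * hs
  simp only [mul_eq_zero, sub_eq_zero, add_eq_zero_iff_eq_neg] at hprod
  tauto

theorem involutive_comp_pow_mul {n : ℕ} {w : K} (hw : w ≠ 0) (hwn : w ^ n = -1) {U : Set K}
    {h : K → K} (hU : ∀ x ≠ 0, x ^ n ∈ U ∨ -x ^ n ∈ U) (hh : ∀ u ∈ U, h u = w ∧ h (-u) = w⁻¹) :
    Function.Involutive fun x ↦ h (x ^ n) * x := by
  intro x
  by_cases hx : x = 0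
  · simp [hx]
  dsimp only
  rcases hU x hx with hxU | hxU
  · have hwx : (w * x) ^ n = -x ^ n := by rw [mul_pow, hwn, neg_one_mul]
    rw [(hh _ hxU).1, hwx, (hh _ hxU).2, inv_mul_cancel_left₀ hw]
  · have hx' : h (x ^ n) = w⁻¹ := by simpa using (hh _ hxU).2
    have hwx : (w⁻¹ * x) ^ n = -x ^ n := by rw [mul_pow, inv_pow, hwn]; ring
    rw [hx', hwx, (hh _ hxU).1, mul_inv_cancel_left₀ hw]

/-- The even part `a₀` is `(w + w⁻¹) / 2`, and the odd part takes the value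
`(s + 1) a₁ = (w - w⁻¹) / 2` at both `1` and `s`, because `s ^ 4 = 1`. -/
theorem cubic_eval_eq_of_sq_eq_neg_one {s w a0 a1 u : K} (hs : s ^ 2 = -1) (h2 : (2 : K) ≠ 0)
    (hw : w ≠ 0) (ha0 : a0 = (w ^ 2 + 1) / (2 * w))
    (ha1 : a1 = (s + 1) * (w ^ 2 - 1) / (4 * (w * s))) (hu : u = 1 ∨ u = s) :
    s * a1 * u ^ 3 + a1 * u + a0 = w ∧ s * a1 * (-u) ^ 3 + a1 * (-u) + a0 = w⁻¹ := by
  have hs0 : s ≠ 0 := by rintro rfl; simp at hs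
  have h4 : (4 : K) ≠ 0 := by simpa [show (4 : K) = 2 * 2 by norm_num] using h2
  subst ha0 ha1
  rcases hu with hu | hu <;> subst u <;> constructor <;> field_simp
  · linear_combination (2 * (w ^ 2 - 1)) * hs
  · linear_combination (-2 * (w ^ 2 - 1)) * hs
  · linear_combination (2 * (w ^ 2 - 1) * (s ^ 2 + s - 1)) * hs
  · linear_combination (-2 * (w ^ 2 - 1) * (s ^ 2 + s - 1)) * hs

theorem involutive_of_sq_eq_neg_one {d : ℕ} {s w a0 a1 : K} (hs : s ^ 2 = -1) (h2 : (2 : K) ≠ 0)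
    (hw : w ≠ 0) (hwd : w ^ d = -1) (hroots : ∀ x : K, x ≠ 0 → (x ^ d) ^ 4 = 1)
    (ha0 : a0 = (w ^ 2 + 1) / (2 * w)) (ha1 : a1 = (s + 1) * (w ^ 2 - 1) / (4 * (w * s))) :
    Function.Involutive fun x ↦ s * a1 * x ^ (3 * d + 1) + a1 * x ^ (d + 1) + a0 * x := by
  have hU : ∀ x : K, x ≠ 0 → x ^ d ∈ ({1, s} : Set K) ∨ -x ^ d ∈ ({1, s} : Set K) := by
    intro x hx
    rcases eq_or_eq_neg_of_pow_four_eq_one hs (hroots x hx) with h | h | h | h <;> simp [h]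
  have hh : ∀ u ∈ ({1, s} : Set K),
      s * a1 * u ^ 3 + a1 * u + a0 = w ∧ s * a1 * (-u) ^ 3 + a1 * (-u) + a0 = w⁻¹ :=
    fun u hu ↦ cubic_eval_eq_of_sq_eq_neg_one hs h2 hw ha0 ha1 hu
  convert involutive_comp_pow_mul hw hwd hU hh using 2 with x
  ring

end

theorem isPrimitiveRoot_of_forall_mem_zpowers {F : Type*} [Field F] [Fintype F] {g : Fˣ}
    (hg : ∀ x : Fˣ, x ∈ Subgroup.zpowers g) : IsPrimitiveRoot (g : F) (Fintype.card F - 1) := by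
  classical
  rw [← Fintype.card_units, ← Nat.card_eq_fintype_card,
    ← orderOf_eq_card_of_forall_mem_zpowers hg, ← orderOf_units]
  exact IsPrimitiveRoot.orderOf _

theorem stmt0_general {F : Type*} [Field F] [Fintype F] (q : ℕ)
    (hq : Fintype.card F = q) (hq4 : q % 4 = 1)
    (d : ℕ) (hd : d = (q - 1) / 4)
    (g : Fˣ) (hg : ∀ x : Fˣ, x ∈ Subgroup.zpowers g)
    (i : ℕ)
    (a0 a1 a2 : F)
    (ha0 : a0 = ((g : F) ^ (2 * (4 * i + 2)) + 1) / (2 * (g : F) ^ (4 * i + 2)))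
    (ha1 : a1 = (((g : F) ^ d + 1) * ((g : F) ^ (2 * (4 * i + 2)) - 1)) /
      (4 * (g : F) ^ (4 * i + d + 2)))
    (ha2 : a2 = (g : F) ^ d * a1)
    (f : F → F)
    (hf : ∀ x, f x = a2 * x ^ (3 * d + 1) + a1 * x ^ (d + 1) + a0 * x) :
    Function.Bijective f ∧ ∀ x, f (f x) = x := by
  have hqd : q - 1 = 4 * d := by omega
  have hζ : IsPrimitiveRoot (g : F) (4 * d) :=
    hqd ▸ hq ▸ isPrimitiveRoot_of_forall_mem_zpowers hg
  have hd0 : 0 < d := by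
    have := hq ▸ Fintype.one_lt_card (α := F)
    omega
  have hζd : IsPrimitiveRoot ((g : F) ^ d) 4 := hζ.pow (by omega) (mul_comm _ _)
  have hs : ((g : F) ^ d) ^ 2 = -1 := (hζd.pow (by norm_num) rfl).eq_neg_one_of_two_right
  have h2 : (2 : F) ≠ 0 := fun h ↦
    hζd.pow_ne_one_of_pos_of_lt two_ne_zero (by norm_num) (by linear_combination hs - h)
  have hwd : ((g : F) ^ (4 * i + 2)) ^ d = -1 := by
    rw [← pow_mul, show (4 * i + 2) * d = 4 * d * i + d * 2 by ring, pow_add, pow_mul _ (4 * d),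
      hζ.pow_eq_one, one_pow, one_mul, pow_mul, hs]
  have hroots : ∀ x : F, x ≠ 0 → (x ^ d) ^ 4 = 1 := fun x hx ↦ by
    rw [← pow_mul, mul_comm, ← hqd, ← hq, FiniteField.pow_card_sub_one_eq_one x hx]
  have ha0' : a0 = (((g : F) ^ (4 * i + 2)) ^ 2 + 1) / (2 * (g : F) ^ (4 * i + 2)) := by
    rw [ha0, ← pow_mul, mul_comm 2]
  have ha1' : a1 = ((g : F) ^ d + 1) * (((g : F) ^ (4 * i + 2)) ^ 2 - 1) /
      (4 * ((g : F) ^ (4 * i + 2) * (g : F) ^ d)) := by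
    rw [ha1, ← pow_mul, ← pow_add, mul_comm 2, add_right_comm]
  have hinv :=
    involutive_of_sq_eq_neg_one hs h2 (pow_ne_zero _ g.ne_zero) hwd hroots ha0' ha1'
  have hf' : f = fun x ↦ (g : F) ^ d * a1 * x ^ (3 * d + 1) + a1 * x ^ (d + 1) + a0 * x :=
    funext fun x ↦ by rw [hf, ha2]
  subst hf'
  exact ⟨hinv.bijective, hinv⟩

theorem stmt0 {F : Type*} [Field F] [Fintype F] (q : ℕ)
    (hq : Fintype.card F = q) (hq4 : q % 4 = 1)
    (d : ℕ) (hd : d = (q - 1) / 4)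
    (g : Fˣ) (hg : ∀ x : Fˣ, x ∈ Subgroup.zpowers g)
    (i : ℕ) (hi : i ≤ d - 1)
    (a0 a1 a2 : F)
    (ha0 : a0 = ((g : F) ^ (2 * (4 * i + 2)) + 1) / (2 * (g : F) ^ (4 * i + 2)))
    (ha1 : a1 = (((g : F) ^ d + 1) * ((g : F) ^ (2 * (4 * i + 2)) - 1)) /
      (4 * (g : F) ^ (4 * i + d + 2)))
    (ha2 : a2 = (g : F) ^ d * a1)
    (f : F → F)
    (hf : ∀ x, f x = a2 * x ^ (3 * d + 1) + a1 * x ^ (d + 1) + a0 * x) :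
    Function.Bijective f ∧ ∀ x, f (f x) = x :=
  stmt0_general q hq hq4 d hd g hg i a0 a1 a2 ha0 ha1 ha2 f hf
end

section
/- Let q be a prime power with q ≡ 1 (mod 4), d = (q-1)/4, and g a generator of F_q^*. For any integer i with 0 ≤ i ≤ d-1, with a₀, a₁, a₂ defined by a₀ = (g^(2(4i+2)) + 1)/(2g^(4i+2)), a₁ = (g^d + 1)(g^(2(4i+2)) - 1)/(4g^(4i+d+2)), a₂ = g^d·a₁, the function f(x) = a₂x^(3d+1) + a₁x^(d+1) + a₀x on F_q has 0 as its only fixed point. -/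
theorem stmt1 {F : Type*} [Field F] [Fintype F] (q : ℕ)
    (hq : Fintype.card F = q) (hq4 : q % 4 = 1)
    (d : ℕ) (hd : d = (q - 1) / 4)
    (g : Fˣ) (hg : ∀ x : Fˣ, x ∈ Subgroup.zpowers g)
    (i : ℕ) (hi : i ≤ d - 1)
    (a0 a1 a2 : F)
    (ha0 : a0 = ((g : F) ^ (2 * (4 * i + 2)) + 1) / (2 * (g : F) ^ (4 * i + 2)))
    (ha1 : a1 = (((g : F) ^ d + 1) * ((g : F) ^ (2 * (4 * i + 2)) - 1)) /
      (4 * (g : F) ^ (4 * i + d + 2)))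
    (ha2 : a2 = (g : F) ^ d * a1)
    (f : F → F)
    (hf : ∀ x, f x = a2 * x ^ (3 * d + 1) + a1 * x ^ (d + 1) + a0 * x) :
    ∀ x : F, f x = x ↔ x = 0 := by
  classical
  have hcard : Fintype.card F ≥ 2 := Fintype.one_lt_card
  have hq5 : 5 ≤ q := by omega
  have hd4 : 4 * d = q - 1 := by omega
  have hd1 : 1 ≤ d := by omega
  -- order of g
  have horder : orderOf g = q - 1 := by
    rw [orderOf_eq_card_of_forall_mem_zpowers hg, Nat.card_eq_fintype_card,
      Fintype.card_units, hq]
  set G : F := (g : F) with hG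
  have hG0 : G ≠ 0 := g.ne_zero
  have hpow1 : ∀ n : ℕ, G ^ n = 1 ↔ (q - 1) ∣ n := by
    intro n
    rw [show G ^ n = ((g ^ n : Fˣ) : F) from (Units.val_pow_eq_pow_val g n).symm,
      Units.val_eq_one, ← horder]
    exact orderOf_dvd_iff_pow_eq_one.symm
  set s : F := G ^ d with hsdef
  set u : F := G ^ (4 * i + 2) with hudef
  have hu0 : u ≠ 0 := pow_ne_zero _ hG0
  have hs0 : s ≠ 0 := pow_ne_zero _ hG0
  -- s^2 = -1
  have hs2ne1 : s ^ 2 ≠ 1 := by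
    intro h
    rw [hsdef, ← pow_mul] at h
    have := Nat.le_of_dvd (by omega) ((hpow1 _).mp h)
    omega
  have hs4 : s ^ 4 = 1 := by
    rw [hsdef, ← pow_mul]
    exact (hpow1 _).mpr ⟨1, by omega⟩
  have hs2 : s ^ 2 = -1 := by
    rcases mul_self_eq_one_iff.mp (show s ^ 2 * s ^ 2 = 1 by
      rw [← pow_add]; exact hs4) with h | h
    · exact absurd h hs2ne1
    · exact h
  have hs3 : s ^ 3 = -s := by
    linear_combination s * hs2
  -- u ≠ 1
  have hu1 : u ≠ 1 := by
    intro h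
    rw [hudef] at h
    have := Nat.le_of_dvd (by omega) ((hpow1 _).mp h)
    omega
  -- 2 ≠ 0, 4 ≠ 0
  have h2 : (2 : F) ≠ 0 := by
    intro h
    apply hs2ne1
    rw [hs2]
    linear_combination -h
  have h4 : (4 : F) ≠ 0 := by
    intro h
    apply h2
    have : (2 : F) * 2 = 0 := by linear_combination h
    rcases mul_eq_zero.mp this with h' | h' <;> exact h'
  -- cleaned coefficient equations
  have hG2 : G ^ (2 * (4 * i + 2)) = u ^ 2 := by
    rw [hudef, ← pow_mul, mul_comm]
  have hGus : G ^ (4 * i + d + 2) = u * s := by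
    rw [hudef, hsdef, ← pow_add]
    congr 1
    ring
  have e0 : a0 * (2 * u) = u ^ 2 + 1 := by
    rw [ha0, hG2]
    field_simp
  have e1 : a1 * (4 * u * s) = (s + 1) * (u ^ 2 - 1) := by
    rw [ha1, hG2, hGus]
    field_simp
  have e2 : a2 = s * a1 := ha2
  have h4su : (4 : F) * s * u ≠ 0 := by
    intro h
    rcases mul_eq_zero.mp h with h' | h'
    · rcases mul_eq_zero.mp h' with h'' | h''
      · exact h4 h''
      · exact hs0 h''
    · exact hu0 h'
  -- the four key value identities
  have K1 : (a2 * 1 ^ 3 + a1 * 1 + a0) * (4 * s * u) = u * (4 * s * u) := by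
    linear_combination (4 * s * u) * e2 + (1 + s) * e1 + (2 * s) * e0 + (u ^ 2 - 1) * hs2
  have Ks : (a2 * s ^ 3 + a1 * s + a0) * (4 * s * u) = u * (4 * s * u) := by
    linear_combination (4 * s * u * a2) * hs3 + (-4 * s ^ 2 * u) * e2 + (s - s ^ 2) * e1 +
      (2 * s) * e0 + (-(s * (u ^ 2 - 1))) * hs2
  have Km1 : (a2 * (-1) ^ 3 + a1 * (-1) + a0) * (4 * s * u * u) = 1 * (4 * s * u) := by
    linear_combination (-4 * s * u ^ 2) * e2 + (-(u * (1 + s))) * e1 + (2 * s * u) * e0 +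
      (-(u * (u ^ 2 - 1))) * hs2
  have Kms : (a2 * (-s) ^ 3 + a1 * (-s) + a0) * (4 * s * u * u) = 1 * (4 * s * u) := by
    linear_combination (-4 * s * u ^ 2 * a2) * hs3 + (4 * s ^ 2 * u ^ 2) * e2 +
      (s * u * (s - 1)) * e1 + (2 * s * u) * e0 + (s * u * (u ^ 2 - 1)) * hs2
  intro x
  constructor
  · intro hfx
    by_contra hx0
    -- t = x^d is a 4th root of unity
    set t : F := x ^ d with htdef
    have ht4 : t ^ 4 = 1 := by
      rw [htdef, ← pow_mul]
      have : d * 4 = q - 1 := by omega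
      rw [this, ← hq]
      exact FiniteField.pow_card_sub_one_eq_one x hx0
    have hcases : t = 1 ∨ t = -1 ∨ t = s ∨ t = -s := by
      have hfac : (t - 1) * (t + 1) * ((t - s) * (t + s)) = 0 := by
        linear_combination ht4 - (t ^ 2 - 1) * hs2
      rcases mul_eq_zero.mp hfac with h | h
      · rcases mul_eq_zero.mp h with h' | h'
        · exact Or.inl (by linear_combination h')
        · exact Or.inr (Or.inl (by linear_combination h'))
      · rcases mul_eq_zero.mp h with h' | h'
        · exact Or.inr (Or.inr (Or.inl (by linear_combination h')))
        · exact Or.inr (Or.inr (Or.inr (by linear_combination h')))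
    -- from the fixed point equation, a2 t^3 + a1 t + a0 = 1
    have hval : a2 * t ^ 3 + a1 * t + a0 = 1 := by
      have hx3 : x ^ (3 * d + 1) = t ^ 3 * x := by
        rw [htdef, pow_succ, ← pow_mul, mul_comm 3 d, pow_mul]
      have hxd : x ^ (d + 1) = t * x := by rw [htdef, pow_succ]
      have h' : (a2 * t ^ 3 + a1 * t + a0) * x = 1 * x := by
        rw [one_mul]
        calc (a2 * t ^ 3 + a1 * t + a0) * x
            = a2 * x ^ (3 * d + 1) + a1 * x ^ (d + 1) + a0 * x := by rw [hx3, hxd]; ring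
          _ = f x := (hf x).symm
          _ = x := hfx
      exact mul_right_cancel₀ hx0 h'
    -- all four cases force u = 1, contradiction
    refine absurd ?_ hu1
    rcases hcases with h | h | h | h
    · rw [h] at hval
      exact mul_right_cancel₀ h4su
        (show u * (4 * s * u) = 1 * (4 * s * u) by linear_combination (4 * s * u) * hval - K1)
    · rw [h] at hval
      exact mul_right_cancel₀ h4su
        (show u * (4 * s * u) = 1 * (4 * s * u) by linear_combination Km1 - (4 * s * u * u) * hval)
    · rw [h] at hval
      exact mul_right_cancel₀ h4su
        (show u * (4 * s * u) = 1 * (4 * s * u) by linear_combination (4 * s * u) * hval - Ks)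
    · rw [h] at hval
      exact mul_right_cancel₀ h4su
        (show u * (4 * s * u) = 1 * (4 * s * u) by linear_combination Kms - (4 * s * u * u) * hval)
  · intro h
    rw [h, hf]
    simp
end

section
/- Let q be a prime power with q ≡ 1 (mod 4), d = (q-1)/4, and g a generator of F_q^*. For 0 ≤ i ≤ d-1, define the coefficients a₀, a₁, a₂ of f(x) = a₂x^(3d+1) + a₁x^(d+1) + a₀x as in Theorem 1 (a₀ = (g^(2(4i+2))+1)/(2g^(4i+2)), a₁ = (g^d+1)(g^(2(4i+2))-1)/(4g^(4i+d+2)), a₂ = g^d a₁). Then for every integer k, f(g^(4k)) = g^(4k+4i+2) and f(g^(4k+1)) = g^(4k+4i+3). -/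
/-!
Put `ω = g ^ d`, a primitive fourth root of unity, so `ω ^ 2 = -1` and `a₂ = ω a₁`.
On `x = g ^ (4k)` we have `x ^ d = 1`, and on `x = g ^ (4k+1)` we have `x ^ d = ω`;
in both cases `f x = (a₀ + a₁ + a₂) x` because `ω ^ 4 = 1`.
Finally `a₀ + a₁ + a₂ = g ^ (4i+2)`, since `(1 + ω) ^ 2 = 2ω`.
-/

theorem IsPrimitiveRoot.sq_eq_neg_one {R : Type*} [CommRing R] [IsDomain R] {ω : R}
    (h : IsPrimitiveRoot ω 4) : ω ^ 2 = -1 :=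
  (h.pow (by norm_num) (by norm_num : 4 = 2 * 2)).eq_neg_one_of_two_right

theorem IsPrimitiveRoot.two_ne_zero_of_four {R : Type*} [CommRing R] [IsDomain R] {ω : R}
    (h : IsPrimitiveRoot ω 4) : (2 : R) ≠ 0 := by
  have := (h.pow (by norm_num) (by norm_num : 4 = 2 * 2)).neZero'
  exact_mod_cast this.out

theorem zpow_mul_add_pow_eq_of_zpow_eq_one {G : Type*} [Group G] {g : G} {m : ℤ} {d : ℕ}
    (hg : g ^ (m * d) = 1) (k r : ℤ) : (g ^ (m * k + r)) ^ d = (g ^ r) ^ d := by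
  rw [← zpow_natCast, ← zpow_natCast, ← zpow_mul, ← zpow_mul, add_mul, zpow_add,
    mul_right_comm, zpow_mul, hg, one_zpow, one_mul]

section Trinomial

variable {R : Type*} [CommRing R] {a₀ a₁ a₂ x : R} {d : ℕ}

theorem trinomial_eq_of_pow_eq_one (hx : x ^ d = 1) :
    a₂ * x ^ (3 * d + 1) + a₁ * x ^ (d + 1) + a₀ * x = (a₀ + a₁ + a₂) * x := by
  rw [pow_succ, pow_succ, mul_comm 3, pow_mul, hx]
  ring

theorem trinomial_eq_of_pow_eq_of_sq_eq_neg_one {ω : R} (hω : ω ^ 2 = -1) (hx : x ^ d = ω) :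
    ω * a₁ * x ^ (3 * d + 1) + a₁ * x ^ (d + 1) + a₀ * x =
      (a₀ + a₁ + ω * a₁) * x := by
  rw [pow_succ, pow_succ, mul_comm 3, pow_mul, hx]
  linear_combination a₁ * x * (ω ^ 2 - 1) * hω

end Trinomial

theorem coeff_sum_eq_of_sq_eq_neg_one {F : Type*} [Field F] {ω b : F} (hω : ω ^ 2 = -1)
    (h2 : (2 : F) ≠ 0) (hb : b ≠ 0) :
    (b ^ 2 + 1) / (2 * b) + (ω + 1) * (b ^ 2 - 1) / (4 * (b * ω)) +
      ω * ((ω + 1) * (b ^ 2 - 1) / (4 * (b * ω))) = b := by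
  have hω0 : ω ≠ 0 := by rintro rfl; norm_num at hω
  have h4 : (4 : F) ≠ 0 := by
    rw [show (4 : F) = 2 * 2 by norm_num]; exact mul_ne_zero h2 h2
  field_simp
  linear_combination 2 * (b ^ 2 - 1) * hω

theorem stmt2_general {F : Type*} [Field F] [Fintype F] (q : ℕ)
    (hq : Fintype.card F = q) (hq4 : q % 4 = 1)
    (d : ℕ) (hd : d = (q - 1) / 4)
    (g : Fˣ) (hg : ∀ x : Fˣ, x ∈ Subgroup.zpowers g)
    (i : ℕ)
    (a0 a1 a2 : F)
    (ha0 : a0 = ((g : F) ^ (2 * (4 * i + 2)) + 1) / (2 * (g : F) ^ (4 * i + 2)))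
    (ha1 : a1 = (((g : F) ^ d + 1) * ((g : F) ^ (2 * (4 * i + 2)) - 1)) /
      (4 * (g : F) ^ (4 * i + d + 2)))
    (ha2 : a2 = (g : F) ^ d * a1)
    (f : F → F)
    (hf : ∀ x, f x = a2 * x ^ (3 * d + 1) + a1 * x ^ (d + 1) + a0 * x) :
    ∀ k : ℤ,
      f ((g ^ (4 * k) : Fˣ) : F) = ((g ^ (4 * k + 4 * (i : ℤ) + 2) : Fˣ) : F) ∧
      f ((g ^ (4 * k + 1) : Fˣ) : F) = ((g ^ (4 * k + 4 * (i : ℤ) + 3) : Fˣ) : F) := by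
  have hq2 : 2 ≤ q := hq ▸ Fintype.one_lt_card
  have hord : orderOf g = 4 * d := by
    rw [orderOf_eq_card_of_forall_mem_zpowers hg, Nat.card_units, Nat.card_eq_fintype_card]
    omega
  have hω : IsPrimitiveRoot ((g : F) ^ d) 4 :=
    (IsPrimitiveRoot.coe_units_iff.mpr (hord ▸ IsPrimitiveRoot.orderOf g)).pow (by omega)
      (mul_comm _ _)
  have hsum : a0 + a1 + a2 = (g : F) ^ (4 * i + 2) := by
    rw [ha2, ha1, ha0, pow_mul', show 4 * i + d + 2 = 4 * i + 2 + d by omega,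
      pow_add _ (4 * i + 2) d]
    exact coeff_sum_eq_of_sq_eq_neg_one hω.sq_eq_neg_one hω.two_ne_zero_of_four
      (pow_ne_zero _ g.ne_zero)
  have hpow (k r : ℤ) : ((g ^ (4 * k + r) : Fˣ) : F) ^ d = (((g ^ r) ^ d : Fˣ) : F) := by
    have hg4d : g ^ ((4 : ℤ) * d) = 1 := by exact_mod_cast hord ▸ pow_orderOf_eq_one g
    rw [← Units.val_pow_eq_pow_val, zpow_mul_add_pow_eq_of_zpow_eq_one hg4d]
  have hshift (k r : ℤ) : ((g ^ (k + 4 * (i : ℤ) + r) : Fˣ) : F) =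
      (g : F) ^ (4 * i + 2) * ((g ^ (k + r - 2) : Fˣ) : F) := by
    rw [show k + 4 * (i : ℤ) + r = ((4 * i + 2 : ℕ) : ℤ) + (k + r - 2) by push_cast; ring,
      zpow_add, zpow_natCast, Units.val_mul, Units.val_pow_eq_pow_val]
  intro k
  constructor
  · rw [hf, trinomial_eq_of_pow_eq_one (by simpa using hpow k 0), hsum, hshift]
    ring_nf
  · rw [hf, ha2,
      trinomial_eq_of_pow_eq_of_sq_eq_neg_one hω.sq_eq_neg_one (by simpa using hpow k 1), ← ha2,
      hsum, hshift]
    ring_nf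

theorem stmt2 {F : Type*} [Field F] [Fintype F] (q : ℕ)
    (hq : Fintype.card F = q) (hq4 : q % 4 = 1)
    (d : ℕ) (hd : d = (q - 1) / 4)
    (g : Fˣ) (hg : ∀ x : Fˣ, x ∈ Subgroup.zpowers g)
    (i : ℕ) (hi : i ≤ d - 1)
    (a0 a1 a2 : F)
    (ha0 : a0 = ((g : F) ^ (2 * (4 * i + 2)) + 1) / (2 * (g : F) ^ (4 * i + 2)))
    (ha1 : a1 = (((g : F) ^ d + 1) * ((g : F) ^ (2 * (4 * i + 2)) - 1)) /
      (4 * (g : F) ^ (4 * i + d + 2)))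
    (ha2 : a2 = (g : F) ^ d * a1)
    (f : F → F)
    (hf : ∀ x, f x = a2 * x ^ (3 * d + 1) + a1 * x ^ (d + 1) + a0 * x) :
    ∀ k : ℤ,
      f ((g ^ (4 * k) : Fˣ) : F) = ((g ^ (4 * k + 4 * (i : ℤ) + 2) : Fˣ) : F) ∧
      f ((g ^ (4 * k + 1) : Fˣ) : F) = ((g ^ (4 * k + 4 * (i : ℤ) + 3) : Fˣ) : F) :=
  stmt2_general q hq hq4 d hd g hg i a0 a1 a2 ha0 ha1 ha2 f hf
end

section
/- Let q be a prime power with q ≡ 1 (mod 4), d = (q-1)/4, and g a generator of F_q^*. For 0 ≤ i ≤ d-1, set a₀ = (g²+1)(g^(2(4i+2))+1)/(4g^(4i+3)), a₁ = (g^(d+2)+1)(g^(2(4i+2))-1)/(4g^(4i+d+3)), a₂ = (g²-1)(g^(2(4i+2))+1)/(4g^(4i+3)), a₃ = (g^(d+2)-1)(g^(2(4i+2))-1)/(4g^(4i+d+3)). Then f(x) = a₃x^(3d+1) + a₂x^(2d+1) + a₁x^(d+1) + a₀x satisfies f(f(x)) = x for all x ∈ F_q, and 0 is the only fixed point of f.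 -/
theorem stmt3 {F : Type*} [Field F] [Fintype F] (q : ℕ)
    (hq : Fintype.card F = q) (hq4 : q % 4 = 1)
    (d : ℕ) (hd : d = (q - 1) / 4)
    (g : Fˣ) (hg : ∀ x : Fˣ, x ∈ Subgroup.zpowers g)
    (i : ℕ) (hi : i ≤ d - 1)
    (a0 a1 a2 a3 : F)
    (ha0 : a0 = (((g : F) ^ 2 + 1) * ((g : F) ^ (2 * (4 * i + 2)) + 1)) /
      (4 * (g : F) ^ (4 * i + 3)))
    (ha1 : a1 = (((g : F) ^ (d + 2) + 1) * ((g : F) ^ (2 * (4 * i + 2)) - 1)) /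
      (4 * (g : F) ^ (4 * i + d + 3)))
    (ha2 : a2 = (((g : F) ^ 2 - 1) * ((g : F) ^ (2 * (4 * i + 2)) + 1)) /
      (4 * (g : F) ^ (4 * i + 3)))
    (ha3 : a3 = (((g : F) ^ (d + 2) - 1) * ((g : F) ^ (2 * (4 * i + 2)) - 1)) /
      (4 * (g : F) ^ (4 * i + d + 3)))
    (f : F → F)
    (hf : ∀ x, f x = a3 * x ^ (3 * d + 1) + a2 * x ^ (2 * d + 1) +
      a1 * x ^ (d + 1) + a0 * x) :
    (∀ x, f (f x) = x) ∧ (∀ x : F, f x = x ↔ x = 0) := by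
  classical
  -- basic numerics
  have hq2 : 1 < q := hq ▸ Fintype.one_lt_card
  have hqd : q = 4 * d + 1 := by omega
  have hd1 : 1 ≤ d := by omega
  -- order of g
  have hog : orderOf g = 4 * d := by
    have h1 := orderOf_eq_card_of_forall_mem_zpowers hg
    rw [Nat.card_eq_fintype_card, Fintype.card_units, hq] at h1
    omega
  have ho4 : orderOf (g ^ d) = 4 := by
    rw [orderOf_pow, hog]
    have hgcd : Nat.gcd (4 * d) d = d := Nat.gcd_eq_right ⟨4, by ring⟩
    rw [hgcd, Nat.mul_div_cancel _ (by omega)]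
  have hzu4 : (g ^ d) ^ 4 = 1 := by
    have := pow_orderOf_eq_one (g ^ d); rwa [ho4] at this
  have hzu2 : (g ^ d) ^ 2 ≠ 1 := by
    intro h
    have h' := orderOf_dvd_of_pow_eq_one h
    rw [ho4] at h'
    exact absurd (Nat.le_of_dvd (by norm_num) h') (by norm_num)
  obtain ⟨Z, hZdef⟩ : ∃ Z : F, Z = (g : F) ^ d := ⟨_, rfl⟩
  obtain ⟨H, hHdef⟩ : ∃ H : F, H = (g : F) ^ (4 * i) := ⟨_, rfl⟩
  have hgne : (g : F) ≠ 0 := Units.ne_zero g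
  have hHne : H ≠ 0 := by rw [hHdef]; exact pow_ne_zero _ hgne
  have hZne : Z ≠ 0 := by rw [hZdef]; exact pow_ne_zero _ hgne
  have hZ4 : Z ^ 4 = 1 := by
    rw [hZdef]
    have h' := congrArg Units.val hzu4
    rw [Units.val_pow_eq_pow_val, Units.val_pow_eq_pow_val, Units.val_one] at h'
    exact h'
  have hZ2ne : Z ^ 2 ≠ 1 := by
    rw [hZdef]; intro h
    exact hzu2 (Units.ext (by
      rw [Units.val_pow_eq_pow_val, Units.val_pow_eq_pow_val, Units.val_one]; exact h))
  have hZ2 : Z ^ 2 = -1 := by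
    rcases mul_eq_zero.mp (show (Z ^ 2 - 1) * (Z ^ 2 + 1) = 0 from by linear_combination hZ4)
      with h | h
    · exact absurd (by linear_combination h) hZ2ne
    · linear_combination h
  have h2 : (2 : F) ≠ 0 := by
    intro h
    exact hZ2ne (by rw [hZ2]; linear_combination -h)
  have h4 : (4 : F) ≠ 0 := by
    intro h
    apply h2
    have h' : (2 : F) * 2 = 0 := by linear_combination h
    rcases mul_eq_zero.mp h' with h'' | h'' <;> exact h''
  have hZ3 : Z ^ 3 = -Z := by rw [pow_succ, hZ2]; ring
  have hZinv : Z⁻¹ = -Z := inv_eq_of_mul_eq_one_right (by linear_combination -hZ2)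
  -- power rewrites
  have hp1 : (g : F) ^ (2 * (4 * i + 2)) = H ^ 2 * (g : F) ^ 4 := by
    rw [hHdef, ← pow_mul, ← pow_add]; congr 1; ring
  have hp2 : (g : F) ^ (4 * i + 3) = H * (g : F) ^ 3 := by rw [hHdef, ← pow_add]
  have hp3 : (g : F) ^ (d + 2) = Z * (g : F) ^ 2 := by rw [hZdef, ← pow_add]
  have hp4 : (g : F) ^ (4 * i + d + 3) = H * Z * (g : F) ^ 3 := by
    rw [hHdef, hZdef, ← pow_add, ← pow_add]
  rw [hp1, hp2] at ha0 ha2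
  rw [hp1, hp3, hp4] at ha1 ha3
  have hden0 : (4 : F) * (H * (g : F) ^ 3) ≠ 0 :=
    mul_ne_zero h4 (mul_ne_zero hHne (pow_ne_zero _ hgne))
  have hden1 : (4 : F) * (H * Z * (g : F) ^ 3) ≠ 0 :=
    mul_ne_zero h4 (mul_ne_zero (mul_ne_zero hHne hZne) (pow_ne_zero _ hgne))
  have hb0 : a0 * (4 * (H * (g : F) ^ 3)) = ((g : F) ^ 2 + 1) * (H ^ 2 * (g : F) ^ 4 + 1) := by
    rw [ha0]; exact div_mul_cancel₀ _ hden0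
  have hb1 : a1 * (4 * (H * Z * (g : F) ^ 3)) =
      (Z * (g : F) ^ 2 + 1) * (H ^ 2 * (g : F) ^ 4 - 1) := by
    rw [ha1]; exact div_mul_cancel₀ _ hden1
  have hb2 : a2 * (4 * (H * (g : F) ^ 3)) = ((g : F) ^ 2 - 1) * (H ^ 2 * (g : F) ^ 4 + 1) := by
    rw [ha2]; exact div_mul_cancel₀ _ hden0
  have hb3 : a3 * (4 * (H * Z * (g : F) ^ 3)) =
      (Z * (g : F) ^ 2 - 1) * (H ^ 2 * (g : F) ^ 4 - 1) := by
    rw [ha3]; exact div_mul_cancel₀ _ hden1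
  -- the four coset constants
  have hc0 : a3 + a2 + a1 + a0 = H * (g : F) ^ 3 :=
    mul_right_cancel₀ hden1 (by linear_combination Z * hb0 + hb1 + Z * hb2 + hb3)
  have hc1 : a3 * Z ^ 3 + a2 * Z ^ 2 + a1 * Z + a0 = H * (g : F) :=
    mul_right_cancel₀ hden1 (by
      linear_combination Z * hb0 + Z * hb1 + Z ^ 3 * hb2 + Z ^ 3 * hb3 +
        (-2 * Z * (g : F) ^ 4 * H ^ 2 + (Z + Z ^ 2) * (g : F) ^ 6 * H ^ 2 +
          (Z - Z ^ 2) * (g : F) ^ 2) * hZ2)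
  have hc2 : (a0 - a1 + a2 - a3) * (H * (g : F)) = 1 :=
    mul_right_cancel₀ hden1 (by
      linear_combination (H * (g : F) * Z) * hb0 - (H * (g : F)) * hb1 +
        (H * (g : F) * Z) * hb2 - (H * (g : F)) * hb3)
  have hc3 : (a0 - a1 * Z + a2 * Z ^ 2 - a3 * Z ^ 3) * (H * (g : F) ^ 3) = 1 :=
    mul_right_cancel₀ hden1 (by
      linear_combination (H * (g : F) ^ 3 * Z) * hb0 - (Z * H * (g : F) ^ 3) * hb1 +
        (Z ^ 3 * H * (g : F) ^ 3) * hb2 - (Z ^ 3 * H * (g : F) ^ 3) * hb3 +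
        (-2 * Z * (g : F) ^ 3 * H + (Z - Z ^ 2) * (g : F) ^ 9 * H ^ 3 +
          (Z + Z ^ 2) * (g : F) ^ 5 * H) * hZ2)
  have hE2 : a0 - a1 + a2 - a3 = (H * (g : F))⁻¹ := eq_inv_of_mul_eq_one_left hc2
  have hE3 : a0 - a1 * Z + a2 * Z ^ 2 - a3 * Z ^ 3 = (H * (g : F) ^ 3)⁻¹ :=
    eq_inv_of_mul_eq_one_left hc3
  -- d-th powers
  have hHd : H ^ d = 1 := by
    rw [hHdef, ← pow_mul, show 4 * i * d = d * 4 * i from by ring, pow_mul, pow_mul,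
      ← hZdef, hZ4, one_pow]
  have hG3d : ((g : F) ^ 3) ^ d = -Z := by
    rw [← pow_mul, show 3 * d = d * 3 from by ring, pow_mul, ← hZdef, hZ3]
  -- rewrite f
  have hf' : ∀ x : F, f x = (a3 * (x ^ d) ^ 3 + a2 * (x ^ d) ^ 2 + a1 * x ^ d + a0) * x := by
    intro x
    rw [hf x, show 3 * d + 1 = d * 3 + 1 from by ring, show 2 * d + 1 = d * 2 + 1 from by ring,
      show d + 1 = d * 1 + 1 from by ring, pow_succ, pow_succ, pow_succ, pow_mul, pow_mul,
      pow_mul]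
    ring
  have hf0 : f 0 = 0 := by rw [hf' 0]; ring
  -- divisibility helper
  have hdvd : ∀ m : ℕ, (g : F) ^ m = 1 → 4 * d ∣ m := by
    intro m hm
    rw [← hog]
    exact orderOf_dvd_of_pow_eq_one
      (Units.ext (by rw [Units.val_pow_eq_pow_val, hm, Units.val_one]))
  -- main claim for nonzero x
  have main : ∀ x : F, x ≠ 0 → f (f x) = x ∧ f x ≠ x := by
    intro x hx
    obtain ⟨k, hk⟩ := mem_powers_iff_mem_zpowers.mpr (hg (Units.mk0 x hx))
    have hxk : x = (g : F) ^ k := by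
      have h' := congrArg Units.val hk
      rw [Units.val_pow_eq_pow_val, Units.val_mk0] at h'
      exact h'.symm
    subst hxk
    have hx' : (g : F) ^ k ≠ 0 := pow_ne_zero _ hgne
    have hxd : ((g : F) ^ k) ^ d = Z ^ (k % 4) := by
      rw [← pow_mul, mul_comm k d, pow_mul, ← hZdef]
      conv_lhs => rw [← Nat.div_add_mod k 4]
      rw [pow_add, pow_mul, hZ4, one_pow, one_mul]
    have hcase : k % 4 = 0 ∨ k % 4 = 1 ∨ k % 4 = 2 ∨ k % 4 = 3 := by omega
    rcases hcase with h | h | h | h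
    · -- k ≡ 0 : f x = H g³ x
      have hxd0 : ((g : F) ^ k) ^ d = 1 := by rw [hxd, h, pow_zero]
      have hfx : f ((g : F) ^ k) = H * (g : F) ^ 3 * (g : F) ^ k := by
        rw [hf' _, hxd0]; linear_combination ((g : F) ^ k) * hc0
      have hfxd : (f ((g : F) ^ k)) ^ d = -Z := by
        rw [hfx, mul_pow, mul_pow, hHd, hG3d, hxd0]; ring
      constructor
      · rw [hf' (f ((g : F) ^ k)), hfxd, hfx]
        linear_combination ((g : F) ^ k) * hc3
      · intro hcon
        rw [hfx] at hcon
        have h1 : H * (g : F) ^ 3 = 1 := mul_right_cancel₀ hx' (by rw [hcon, one_mul])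
        have h2' : (g : F) ^ (4 * i + 3) = 1 := by rw [pow_add, ← hHdef]; exact h1
        have := Nat.le_of_dvd (by omega) (hdvd _ h2')
        omega
    · -- k ≡ 1 : f x = H g x
      have hxd1 : ((g : F) ^ k) ^ d = Z := by rw [hxd, h, pow_one]
      have hfx : f ((g : F) ^ k) = H * (g : F) * (g : F) ^ k := by
        rw [hf' _, hxd1]; linear_combination ((g : F) ^ k) * hc1
      have hfxd : (f ((g : F) ^ k)) ^ d = -1 := by
        rw [hfx, mul_pow, mul_pow, hHd, hxd1, ← hZdef]
        linear_combination hZ2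
      constructor
      · rw [hf' (f ((g : F) ^ k)), hfxd, hfx]
        linear_combination ((g : F) ^ k) * hc2
      · intro hcon
        rw [hfx] at hcon
        have h1 : H * (g : F) = 1 := mul_right_cancel₀ hx' (by rw [hcon, one_mul])
        have h2' : (g : F) ^ (4 * i + 1) = 1 := by rw [pow_succ, ← hHdef]; exact h1
        have := Nat.le_of_dvd (by omega) (hdvd _ h2')
        omega
    · -- k ≡ 2 : f x = (H g)⁻¹ x
      have hxd2 : ((g : F) ^ k) ^ d = -1 := by rw [hxd, h, hZ2]
      have hfx : f ((g : F) ^ k) = (a0 - a1 + a2 - a3) * (g : F) ^ k := by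
        rw [hf' _, hxd2]; ring
      have hE2d : (a0 - a1 + a2 - a3) ^ d = -Z := by
        rw [hE2, inv_pow, mul_pow, hHd, one_mul, ← hZdef, hZinv]
      have hfxd : (f ((g : F) ^ k)) ^ d = Z := by
        rw [hfx, mul_pow, hE2d, hxd2]; ring
      constructor
      · rw [hf' (f ((g : F) ^ k)), hfxd, hfx]
        linear_combination ((a0 - a1 + a2 - a3) * (g : F) ^ k) * hc1 + ((g : F) ^ k) * hc2
      · intro hcon
        rw [hfx] at hcon
        have h1 : a0 - a1 + a2 - a3 = 1 := mul_right_cancel₀ hx' (by rw [hcon, one_mul])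
        have h1' : H * (g : F) = 1 := by rw [h1, one_mul] at hc2; exact hc2
        have h2' : (g : F) ^ (4 * i + 1) = 1 := by rw [pow_succ, ← hHdef]; exact h1'
        have := Nat.le_of_dvd (by omega) (hdvd _ h2')
        omega
    · -- k ≡ 3 : f x = (H g³)⁻¹ x
      have hxd3 : ((g : F) ^ k) ^ d = -Z := by rw [hxd, h, hZ3]
      have hfx : f ((g : F) ^ k) = (a0 - a1 * Z + a2 * Z ^ 2 - a3 * Z ^ 3) * (g : F) ^ k := by
        rw [hf' _, hxd3]; ring
      have hE3d : (a0 - a1 * Z + a2 * Z ^ 2 - a3 * Z ^ 3) ^ d = Z := by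
        rw [hE3, inv_pow, mul_pow, hHd, one_mul, hG3d, inv_neg, hZinv, neg_neg]
      have hfxd : (f ((g : F) ^ k)) ^ d = 1 := by
        rw [hfx, mul_pow, hE3d, hxd3]; linear_combination -hZ2
      constructor
      · rw [hf' (f ((g : F) ^ k)), hfxd, hfx]
        linear_combination ((a0 - a1 * Z + a2 * Z ^ 2 - a3 * Z ^ 3) * (g : F) ^ k) * hc0 +
          ((g : F) ^ k) * hc3
      · intro hcon
        rw [hfx] at hcon
        have h1 : a0 - a1 * Z + a2 * Z ^ 2 - a3 * Z ^ 3 = 1 :=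
          mul_right_cancel₀ hx' (by rw [hcon, one_mul])
        have h1' : H * (g : F) ^ 3 = 1 := by rw [h1, one_mul] at hc3; exact hc3
        have h2' : (g : F) ^ (4 * i + 3) = 1 := by rw [pow_add, ← hHdef]; exact h1'
        have := Nat.le_of_dvd (by omega) (hdvd _ h2')
        omega
  constructor
  · intro x
    by_cases hx : x = 0
    · rw [hx, hf0, hf0]
    · exact (main x hx).1
  · intro x
    constructor
    · intro hfix
      by_contra hx
      exact (main x hx).2 hfix
    · rintro rfl
      exact hf0
end

section
/- Let q be a prime power with q ≡ 1 (mod 4), d = (q-1)/4, and g a generator of F_q^*. For 0 ≤ i ≤ d-1, define the quadrinomial of Theorem 2 with coefficients a₀ = (g²+1)(g^(2(4i+2))+1)/(4g^(4i+3)), a₁ = (g^(d+2)+1)(g^(2(4i+2))-1)/(4g^(4i+d+3)), a₂ = (g²-1)(g^(2(4i+2))+1)/(4g^(4i+3)), a₃ = (g^(d+2)-1)(g^(2(4i+2))-1)/(4g^(4i+d+3)). Then for every integer k, f(g^(4k)) = g^(4(k+i)+3) and f(g^(4k+1)) = g^(4(k+i)+2), where f(x) = a₃x^(3d+1) + a₂x^(2d+1)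 + a₁x^(d+1) + a₀x. -/
theorem stmt4 {F : Type*} [Field F] [Fintype F] (q : ℕ)
    (hq : Fintype.card F = q) (hq4 : q % 4 = 1)
    (d : ℕ) (hd : d = (q - 1) / 4)
    (g : Fˣ) (hg : ∀ x : Fˣ, x ∈ Subgroup.zpowers g)
    (i : ℕ) (hi : i ≤ d - 1)
    (a0 a1 a2 a3 : F)
    (ha0 : a0 = (((g : F) ^ 2 + 1) * ((g : F) ^ (2 * (4 * i + 2)) + 1)) /
      (4 * (g : F) ^ (4 * i + 3)))
    (ha1 : a1 = (((g : F) ^ (d + 2) + 1) * ((g : F) ^ (2 * (4 * i + 2)) - 1)) /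
      (4 * (g : F) ^ (4 * i + d + 3)))
    (ha2 : a2 = (((g : F) ^ 2 - 1) * ((g : F) ^ (2 * (4 * i + 2)) + 1)) /
      (4 * (g : F) ^ (4 * i + 3)))
    (ha3 : a3 = (((g : F) ^ (d + 2) - 1) * ((g : F) ^ (2 * (4 * i + 2)) - 1)) /
      (4 * (g : F) ^ (4 * i + d + 3)))
    (f : F → F)
    (hf : ∀ x, f x = a3 * x ^ (3 * d + 1) + a2 * x ^ (2 * d + 1) +
      a1 * x ^ (d + 1) + a0 * x) :
    ∀ k : ℤ,
      f ((g ^ (4 * k) : Fˣ) : F) = ((g ^ (4 * (k + (i : ℤ)) + 3) : Fˣ) : F) ∧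
      f ((g ^ (4 * k + 1) : Fˣ) : F) = ((g ^ (4 * (k + (i : ℤ)) + 2) : Fˣ) : F) := by
  -- basic numerology
  have hcard2 : 2 ≤ q := hq ▸ Fintype.one_lt_card
  have hq5 : 5 ≤ q := by omega
  have hqd : q - 1 = 4 * d := by omega
  have hd1 : 1 ≤ d := by omega
  -- order of g
  have horder : orderOf g = 4 * d := by
    rw [orderOf_eq_card_of_forall_mem_zpowers hg, Nat.card_units, Nat.card_eq_fintype_card, hq]
    omega
  have hgord : g ^ (4 * d) = 1 := by
    rw [← horder]; exact pow_orderOf_eq_one g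
  -- g^(2d) = -1 in F
  have hu : (g : F) ≠ 0 := Units.ne_zero g
  have hne1 : ((g : F)) ^ (2 * d) ≠ 1 := by
    intro h
    have h2 : g ^ (2 * d) = 1 := Units.ext h
    have := orderOf_dvd_of_pow_eq_one h2
    rw [horder] at this
    have := Nat.le_of_dvd (by omega) this
    omega
  have hsq : ((g : F)) ^ (2 * d) * ((g : F)) ^ (2 * d) = 1 := by
    have : ((g : F)) ^ (2 * d) * ((g : F)) ^ (2 * d) = ((g : F)) ^ (4 * d) := by ring
    rw [this]
    have : ((g ^ (4 * d) : Fˣ) : F) = 1 := by rw [hgord]; rfl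
    simpa using this
  have h2d : ((g : F)) ^ (2 * d) = -1 := by
    have hfac : (((g : F)) ^ (2 * d) - 1) * (((g : F)) ^ (2 * d) + 1) = 0 := by
      linear_combination hsq
    rcases mul_eq_zero.mp hfac with h | h
    · exact absurd (sub_eq_zero.mp h) hne1
    · exact eq_neg_of_add_eq_zero_left h
  have h2ne : (2 : F) ≠ 0 := by
    intro h
    have hneg : (-1 : F) = 1 := by linear_combination -h
    exact hne1 (by rw [h2d, hneg])
  have h4ne : (4 : F) ≠ 0 := by
    intro h
    have : (4 : F) = 2 * 2 := by norm_num
    rw [this] at h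
    rcases mul_eq_zero.mp h with h | h <;> exact h2ne h
  have hp1 : (g : F) ^ (4 * i + 3) ≠ 0 := pow_ne_zero _ hu
  have hp2 : (g : F) ^ (4 * i + d + 3) ≠ 0 := pow_ne_zero _ hu
  -- coefficient identities
  have hD1 : (4 * (g : F) ^ (4 * i + 3)) ≠ 0 := mul_ne_zero h4ne hp1
  have hD2 : (4 * (g : F) ^ (4 * i + d + 3)) ≠ 0 := mul_ne_zero h4ne hp2
  have hsum : a0 + a1 + a2 + a3 = (g : F) ^ (4 * i + 3) := by
    rw [ha0, ha1, ha2, ha3]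
    rw [div_add_div _ _ hD1 hD2, div_add_div _ _ (mul_ne_zero hD1 hD2) hD1,
      div_add_div _ _ (mul_ne_zero (mul_ne_zero hD1 hD2) hD1) hD2,
      div_eq_iff (mul_ne_zero (mul_ne_zero (mul_ne_zero hD1 hD2) hD1) hD2)]
    ring
  have hdiff : (a0 - a2) + (g : F) ^ d * (a1 - a3) = (g : F) ^ (4 * i + 1) := by
    rw [ha0, ha1, ha2, ha3]
    rw [div_sub_div _ _ hD1 hD1, div_sub_div _ _ hD2 hD2, ← mul_div_assoc,
      div_add_div _ _ (mul_ne_zero hD1 hD1) (mul_ne_zero hD2 hD2),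
      div_eq_iff (mul_ne_zero (mul_ne_zero hD1 hD1) (mul_ne_zero hD2 hD2))]
    ring
  -- periodicity
  have hkey : ∀ m n : ℤ, ((4 * d : ℕ) : ℤ) ∣ (m - n) → g ^ m = g ^ n := by
    intro m n hmn
    have h1 : g ^ (m - n) = 1 := by
      apply orderOf_dvd_iff_zpow_eq_one.mp
      rwa [horder]
    calc g ^ m = g ^ (n + (m - n)) := by ring_nf
    _ = g ^ n * g ^ (m - n) := zpow_add g n (m - n)
    _ = g ^ n := by rw [h1, mul_one]
  have hval : ∀ m : ℤ, ((g ^ m : Fˣ) : F) = (g : F) ^ m := fun m =>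
    Units.val_zpow_eq_zpow_val g m
  have h3d : ((g : F)) ^ (3 * d) = -((g : F)) ^ d := by
    have : (3 : ℕ) * d = 2 * d + d := by ring
    rw [this, pow_add, h2d]; ring
  intro k
  constructor
  · -- f(g^(4k)) = g^(4(k+i)+3)
    have epow : ∀ (c e : ℕ), e = c * d + 1 →
        ((g ^ (4 * k) : Fˣ) : F) ^ e = ((g ^ (4 * k) : Fˣ) : F) := by
      rintro c e rfl
      have : (g ^ (4 * k)) ^ (c * d + 1) = g ^ (4 * k) := by
        rw [← zpow_natCast, ← zpow_mul]
        apply hkey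
        push_cast
        exact ⟨k * c, by ring⟩
      calc ((g ^ (4 * k) : Fˣ) : F) ^ (c * d + 1)
          = (((g ^ (4 * k)) ^ (c * d + 1) : Fˣ) : F) := by push_cast; ring
        _ = ((g ^ (4 * k) : Fˣ) : F) := by rw [this]
    rw [hf]
    rw [epow 3 (3 * d + 1) (by ring), epow 2 (2 * d + 1) (by ring), epow 1 (d + 1) (by ring)]
    have hx : ((g ^ (4 * k) : Fˣ) : F) ^ 1 = ((g ^ (4 * k) : Fˣ) : F) := pow_one _
    have hrhs : ((g ^ (4 * (k + (i : ℤ)) + 3) : Fˣ) : F)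
        = ((g ^ (4 * k) : Fˣ) : F) * (g : F) ^ (4 * i + 3) := by
      have : (4 * (k + (i : ℤ)) + 3) = 4 * k + ((4 * i + 3 : ℕ) : ℤ) := by push_cast; ring
      rw [this, zpow_add, Units.val_mul, zpow_natCast]
      push_cast
      ring
    rw [hrhs]
    linear_combination ((g ^ (4 * k) : Fˣ) : F) * hsum
  · -- f(g^(4k+1)) = g^(4(k+i)+2)
    have epow : ∀ (c e : ℕ), e = c * d + 1 →
        ((g ^ (4 * k + 1) : Fˣ) : F) ^ e
        = ((g ^ (4 * k + 1) : Fˣ) : F) * (g : F) ^ (c * d) := by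
      rintro c e rfl
      have h1 : (g ^ (4 * k + 1)) ^ (c * d + 1) = g ^ ((4 * k + 1) + ((c * d : ℕ) : ℤ)) := by
        rw [← zpow_natCast, ← zpow_mul]
        apply hkey
        push_cast
        exact ⟨k * c, by ring⟩
      calc ((g ^ (4 * k + 1) : Fˣ) : F) ^ (c * d + 1)
          = (((g ^ (4 * k + 1)) ^ (c * d + 1) : Fˣ) : F) := by push_cast; ring
        _ = ((g ^ ((4 * k + 1) + ((c * d : ℕ) : ℤ)) : Fˣ) : F) := by rw [h1]
        _ = ((g ^ (4 * k + 1) : Fˣ) : F) * (g : F) ^ (c * d) := by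
            rw [zpow_add, Units.val_mul, zpow_natCast]
            push_cast
            ring
    rw [hf]
    rw [epow 3 (3 * d + 1) (by ring), epow 2 (2 * d + 1) (by ring), epow 1 (d + 1) (by ring)]
    have hrhs : ((g ^ (4 * (k + (i : ℤ)) + 2) : Fˣ) : F)
        = ((g ^ (4 * k + 1) : Fˣ) : F) * (g : F) ^ (4 * i + 1) := by
      have : (4 * (k + (i : ℤ)) + 2) = (4 * k + 1) + ((4 * i + 1 : ℕ) : ℤ) := by push_cast; ring
      rw [this, zpow_add, Units.val_mul, zpow_natCast]
      push_cast
      ring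
    rw [hrhs]
    have h3d' : (g : F) ^ (3 * d) = -((g : F)) ^ d := h3d
    have h2d' : (g : F) ^ (2 * d) = -1 := h2d
    have h1d : (g : F) ^ (1 * d) = (g : F) ^ d := by rw [one_mul]
    rw [h3d', h2d', h1d]
    linear_combination ((g ^ (4 * k + 1) : Fˣ) : F) * hdiff
end

section
/- Let q be a prime power with q ≡ 1 (mod 4), d = (q-1)/4, g a generator of F_q^*, and 0 ≤ i ≤ d-1. Set α = g^(4i+2) and define a₀ = (α+1)²/(4α), a₁ = (α²-1)/(4α), a₂ = (α-1)²/(4α), a₃ = a₁. Then f(x) = a₃x^(3d+1) + a₂x^(2d+1) + a₁x^(d+1) + a₀x satisfies f(f(x)) = x for all x ∈ F_q. -/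
/-!
Write `f x = x * c (x ^ d)` with `c t = a₁t³ + a₂t² + a₁t + a₀`. For `x ≠ 0`, `t = x ^ d` is a
fourth root of unity, and `c 1 = α`, `c (-1) = α⁻¹`, `c t = 1` when `t² = -1`. Since `α` is a
square but not a fourth power, `α ^ d = -1`, so `f` swaps the cosets `x ^ d = 1` and `x ^ d = -1`
(multiplying by `α` and by `α⁻¹` respectively) and fixes the points with `(x ^ d)² = -1`.
-/

lemma Units.pow_eq_neg_one_of_orderOf_eq_two_mul {R : Type*} [Ring R] [NoZeroDivisors R] {u : Rˣ}
    {n : ℕ} (hn : 0 < n) (hu : orderOf u = 2 * n) : (u : R) ^ n = -1 := by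
  have hsq : ((u : R) ^ n) * ((u : R) ^ n) = 1 := by
    rw [← pow_add, ← two_mul, ← Units.val_pow_eq_pow_val, ← hu, pow_orderOf_eq_one, Units.val_one]
  refine (mul_self_eq_one_iff.mp hsq).resolve_left fun h => ?_
  exact pow_ne_one_of_lt_orderOf (x := u) hn.ne' (by omega) (Units.ext (by simpa using h))

lemma FiniteField.pow_four_mul_add_two_pow_eq_neg_one {F : Type*} [Field F] [Fintype F] {d : ℕ}
    (hd : Fintype.card F = 4 * d + 1) {g : Fˣ} (hg : ∀ x : Fˣ, x ∈ Subgroup.zpowers g) (i : ℕ) :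
    ((g : F) ^ (4 * i + 2)) ^ d = -1 := by
  have horder : orderOf g = 2 * (2 * d) := by
    rw [orderOf_eq_card_of_forall_mem_zpowers hg, Nat.card_units, Nat.card_eq_fintype_card, hd]
    omega
  have hg4 : (g : F) ^ (4 * d) = 1 := by
    have := FiniteField.pow_card_sub_one_eq_one (g : F) g.ne_zero
    rwa [hd, Nat.add_sub_cancel] at this
  have hd0 : 0 < 2 * d := by have := Fintype.one_lt_card (α := F); omega
  have hg2 : (g : F) ^ (2 * d) = -1 := Units.pow_eq_neg_one_of_orderOf_eq_two_mul hd0 horder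
  rw [← pow_mul, show (4 * i + 2) * d = 4 * d * i + 2 * d by ring, pow_add, pow_mul, hg4, hg2,
    one_pow, one_mul]

lemma mul_apply_pow_mul_apply_pow_eq_self {F : Type*} [Field F] {d : ℕ} {c : F → F} {α : F}
    (hα : α ≠ 0) (hαd : α ^ d = -1) (hcone : c 1 = α) (hcneg : c (-1) = α⁻¹)
    (hcI : ∀ t, t ^ 2 = -1 → c t = 1) {x : F} (hx : (x ^ d) ^ 4 = 1) :
    x * c (x ^ d) * c ((x * c (x ^ d)) ^ d) = x := by
  have hfactor : (x ^ d - 1) * (x ^ d + 1) * ((x ^ d) ^ 2 + 1) = 0 := by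
    linear_combination hx
  rcases mul_eq_zero.mp hfactor with h | hI
  · rcases mul_eq_zero.mp h with hone | hneg
    · have ht : x ^ d = 1 := sub_eq_zero.mp hone
      rw [ht, hcone, mul_pow, ht, hαd, one_mul, hcneg, mul_inv_cancel_right₀ hα]
    · have ht : x ^ d = -1 := eq_neg_of_add_eq_zero_left hneg
      rw [ht, hcneg, mul_pow, ht, inv_pow, hαd, inv_neg, inv_one, neg_mul_neg, one_mul, hcone,
        inv_mul_cancel_right₀ hα]
  · have ht : (x ^ d) ^ 2 = -1 := eq_neg_of_add_eq_zero_left hI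
    rw [hcI _ ht, mul_one, hcI _ ht, mul_one]

section QuarticCoeff

variable {F : Type*} [Field F]

def quarticCoeff (α t : F) : F :=
  ((α ^ 2 - 1) * t ^ 3 + (α - 1) ^ 2 * t ^ 2 + (α ^ 2 - 1) * t + (α + 1) ^ 2) / (4 * α)

variable {α : F} (h4 : (4 : F) ≠ 0) (hα : α ≠ 0)
include h4 hα

lemma quarticCoeff_one : quarticCoeff α 1 = α := by
  unfold quarticCoeff
  field_simp
  ring

lemma quarticCoeff_neg_one : quarticCoeff α (-1) = α⁻¹ := by
  unfold quarticCoeff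
  field_simp
  ring

lemma quarticCoeff_of_sq_eq_neg_one {t : F} (ht : t ^ 2 = -1) : quarticCoeff α t = 1 := by
  unfold quarticCoeff
  rw [div_eq_one_iff_eq (mul_ne_zero h4 hα)]
  linear_combination (α - 1) ^ 2 * ht + (α ^ 2 - 1) * t * ht

end QuarticCoeff

theorem stmt5_general {F : Type*} [Field F] [Fintype F] (q : ℕ)
    (hq : Fintype.card F = q) (hq4 : q % 4 = 1)
    (d : ℕ) (hd : d = (q - 1) / 4)
    (g : Fˣ) (hg : ∀ x : Fˣ, x ∈ Subgroup.zpowers g)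
    (i : ℕ)
    (α a0 a1 a2 a3 : F) (hα : α = (g : F) ^ (4 * i + 2))
    (ha0 : a0 = (α + 1) ^ 2 / (4 * α))
    (ha1 : a1 = (α ^ 2 - 1) / (4 * α))
    (ha2 : a2 = (α - 1) ^ 2 / (4 * α))
    (ha3 : a3 = a1)
    (f : F → F)
    (hf : ∀ x, f x = a3 * x ^ (3 * d + 1) + a2 * x ^ (2 * d + 1) +
      a1 * x ^ (d + 1) + a0 * x) :
    ∀ x, f (f x) = x := by
  have hcard : Fintype.card F = 4 * d + 1 := by omega
  have h4 : (4 : F) ≠ 0 := by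
    have h2 : (2 : F) ≠ 0 :=
      Ring.two_ne_zero fun h => by have := FiniteField.even_card_iff_char_two.mp h; omega
    simpa [show (4 : F) = 2 * 2 by norm_num] using h2
  have hα0 : α ≠ 0 := hα ▸ pow_ne_zero _ g.ne_zero
  have hαd : α ^ d = -1 := hα ▸ FiniteField.pow_four_mul_add_two_pow_eq_neg_one hcard hg i
  have hfc : ∀ y, f y = y * quarticCoeff α (y ^ d) := by
    intro y
    rw [hf, ha3, ha0, ha1, ha2, quarticCoeff]
    ring
  intro x
  rcases eq_or_ne x 0 with rfl | hx
  · simp [hfc]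
  have hx4 : (x ^ d) ^ 4 = 1 := by
    rw [← pow_mul, mul_comm, ← Nat.add_sub_cancel (4 * d) 1, ← hcard]
    exact FiniteField.pow_card_sub_one_eq_one x hx
  rw [hfc, hfc]
  exact mul_apply_pow_mul_apply_pow_eq_self hα0 hαd (quarticCoeff_one h4 hα0)
    (quarticCoeff_neg_one h4 hα0) (fun _ => quarticCoeff_of_sq_eq_neg_one h4 hα0) hx4

theorem stmt5 {F : Type*} [Field F] [Fintype F] (q : ℕ)
    (hq : Fintype.card F = q) (hq4 : q % 4 = 1)
    (d : ℕ) (hd : d = (q - 1) / 4)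
    (g : Fˣ) (hg : ∀ x : Fˣ, x ∈ Subgroup.zpowers g)
    (i : ℕ) (hi : i ≤ d - 1)
    (α a0 a1 a2 a3 : F) (hα : α = (g : F) ^ (4 * i + 2))
    (ha0 : a0 = (α + 1) ^ 2 / (4 * α))
    (ha1 : a1 = (α ^ 2 - 1) / (4 * α))
    (ha2 : a2 = (α - 1) ^ 2 / (4 * α))
    (ha3 : a3 = a1)
    (f : F → F)
    (hf : ∀ x, f x = a3 * x ^ (3 * d + 1) + a2 * x ^ (2 * d + 1) +
      a1 * x ^ (d + 1) + a0 * x) :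
    ∀ x, f (f x) = x :=
  stmt5_general q hq hq4 d hd g hg i α a0 a1 a2 a3 hα ha0 ha1 ha2 ha3 f hf
end

section
/- Let q be a prime power with q ≡ 1 (mod 4), d = (q-1)/4, g a generator of F_q^*, and 0 ≤ i ≤ d-1. With α = g^(4i+2), define a₀ = (α+1)²/(4α), a₁ = (α²-1)/(4α), a₂ = (α-1)²/(4α), a₃ = a₁, and f(x) = a₃x^(3d+1) + a₂x^(2d+1) + a₁x^(d+1) + a₀x. Then, provided α ≠ 1, the fixed points of f in F_q are exactly 0 together with the non-squares of F_q^*, so f has exactly (q+1)/2 fixed points in F_q. -/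
theorem stmt6 {F : Type*} [Field F] [Fintype F] (q : ℕ)
    (hq : Fintype.card F = q) (hq4 : q % 4 = 1)
    (d : ℕ) (hd : d = (q - 1) / 4)
    (g : Fˣ) (hg : ∀ x : Fˣ, x ∈ Subgroup.zpowers g)
    (i : ℕ) (hi : i ≤ d - 1)
    (α a0 a1 a2 a3 : F) (hα : α = (g : F) ^ (4 * i + 2))
    (ha0 : a0 = (α + 1) ^ 2 / (4 * α))
    (ha1 : a1 = (α ^ 2 - 1) / (4 * α))
    (ha2 : a2 = (α - 1) ^ 2 / (4 * α))
    (ha3 : a3 = a1)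
    (f : F → F)
    (hf : ∀ x, f x = a3 * x ^ (3 * d + 1) + a2 * x ^ (2 * d + 1) +
      a1 * x ^ (d + 1) + a0 * x)
    (hα1 : α ≠ 1) :
    {x : F | f x = x}.ncard = (q + 1) / 2 ∧
    (∀ x : F, f x = x ↔ (x = 0 ∨ (x ≠ 0 ∧ ¬ IsSquare x))) := by
  have hq2 : 2 ≤ q := hq ▸ Fintype.one_lt_card
  have hqd : q = 4 * d + 1 := by omega
  have hchar : ringChar F ≠ 2 := by
    intro h
    have h2 := FiniteField.even_card_of_char_two (F := F) h
    rw [hq] at h2; omega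
  have h2F : (2 : F) ≠ 0 := Ring.two_ne_zero hchar
  have h4F : (4 : F) ≠ 0 := by
    have : (4 : F) = 2 * 2 := by norm_num
    rw [this]; exact mul_ne_zero h2F h2F
  have hneg : (-1 : F) ≠ 1 := Ring.neg_one_ne_one_of_char_ne_two hchar
  have hα0 : α ≠ 0 := by
    rw [hα]; exact pow_ne_zero _ (Units.ne_zero g)
  have h4α : (4 : F) * α ≠ 0 := mul_ne_zero h4F hα0
  set c : ℕ := Fintype.card F / 2 with hc
  have hc2 : c = 2 * d := by rw [hc, hq, hqd]; omega
  have hcpos : 0 < c := by omega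
  have hzc : ∀ x : F, x ^ c = -1 → x ≠ 0 := by
    intro x h h0
    rw [h0, zero_pow hcpos.ne'] at h
    exact one_ne_zero (neg_eq_zero.mp h.symm)
  -- characterization of nonsquares
  have hns : ∀ x : F, x ≠ 0 → (¬ IsSquare x ↔ x ^ c = -1) := by
    intro x hx
    rw [FiniteField.isSquare_iff hchar hx]
    rcases FiniteField.pow_dichotomy hchar hx with h | h
    · exact iff_of_false (fun h' => h' h) (fun h' => hneg (h'.symm.trans h))
    · exact iff_of_true (fun h' => hneg (h.symm.trans h')) h
  -- key algebraic identity
  have key : ∀ x : F, 4 * α * (f x - x) =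
      x * (α - 1) * ((x ^ d) ^ 2 + 1) * ((α + 1) * x ^ d + (α - 1)) := by
    intro x
    have e3 : x ^ (3 * d + 1) = (x ^ d) ^ 3 * x := by
      rw [← pow_mul, ← pow_succ, Nat.mul_comm]
    have e2 : x ^ (2 * d + 1) = (x ^ d) ^ 2 * x := by
      rw [← pow_mul, ← pow_succ, Nat.mul_comm]
    have e1 : x ^ (d + 1) = x ^ d * x := by rw [pow_succ]
    rw [hf, ha3, ha1, ha0, ha2, e3, e2, e1]
    field_simp
    ring
  -- the main equivalence
  have hmain : ∀ x : F, f x = x ↔ (x = 0 ∨ (x ≠ 0 ∧ ¬ IsSquare x)) := by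
    intro x
    constructor
    · intro hfx
      by_cases hx : x = 0
      · exact Or.inl hx
      · refine Or.inr ⟨hx, ?_⟩
        have h0 : x * (α - 1) * ((x ^ d) ^ 2 + 1) * ((α + 1) * x ^ d + (α - 1)) = 0 := by
          rw [← key, hfx]; ring
        have hα1' : α - 1 ≠ 0 := sub_ne_zero.mpr hα1
        rcases mul_eq_zero.mp h0 with h0 | hlast
        · rcases mul_eq_zero.mp h0 with h0 | hmid
          · rcases mul_eq_zero.mp h0 with h0 | h0
            · exact absurd h0 hx
            · exact absurd h0 hα1'
          · -- (x^d)^2 = -1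
            rw [hns x hx, hc2, Nat.mul_comm 2 d, pow_mul]
            linear_combination hmid
        · -- (α+1) * x^d = -(α-1) ; then square
          have hy4 : ((x ^ d) ^ 2) * ((x ^ d) ^ 2) = 1 := by
            rw [← pow_add, ← pow_mul]
            have : d * (2 + 2) = q - 1 := by omega
            rw [this, ← hq]
            exact FiniteField.pow_card_sub_one_eq_one x hx
          rcases mul_self_eq_one_iff.mp hy4 with hy2 | hy2
          · exfalso
            have hstep : (α + 1) * x ^ d = -(α - 1) := by linear_combination hlast
            have hsq : ((α + 1) * x ^ d) ^ 2 = (α - 1) ^ 2 := by rw [hstep]; ring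
            have : (4 : F) * α = 0 := by
              rw [mul_pow, hy2, mul_one] at hsq
              linear_combination hsq
            exact h4α this
          · rw [hns x hx, hc2, Nat.mul_comm 2 d, pow_mul, hy2]
    · intro h
      rcases h with h | ⟨hx, hx2⟩
      · rw [hf, h]; simp
      · have hy2 : (x ^ d) ^ 2 = -1 := by
          rw [← pow_mul, Nat.mul_comm d 2, ← hc2]
          exact (hns x hx).mp hx2
        have h0 : 4 * α * (f x - x) = 0 := by
          rw [key, hy2]; ring
        have hsub := (mul_eq_zero.mp h0).resolve_left h4α
        linear_combination hsub
  refine ⟨?_, hmain⟩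
  -- rewrite the fixed-point set
  have hset : {x : F | f x = x} = insert (0 : F) {x : F | x ^ c = -1} := by
    ext x
    simp only [Set.mem_setOf_eq, Set.mem_insert_iff, hmain x]
    constructor
    · rintro (h | ⟨hx, h⟩)
      · exact Or.inl h
      · exact Or.inr ((hns x hx).mp h)
    · rintro (h | h)
      · exact Or.inl h
      · exact Or.inr ⟨hzc x h, (hns x (hzc x h)).mpr h⟩
  rw [hset]
  have h0nB : (0 : F) ∉ {x : F | x ^ c = -1} := fun h => hzc 0 h rfl
  rw [Set.ncard_insert_of_notMem h0nB]
  -- count {x | x^c = -1}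
  obtain ⟨u, hu⟩ := FiniteField.exists_nonsquare (F := F) hchar
  have hu0 : u ≠ 0 := fun h => hu (h ▸ ⟨0, by ring⟩)
  have huc : u ^ c = -1 := (hns u hu0).mp hu
  have himg : (fun x => u * x) '' {x : F | x ^ c = 1} = {x : F | x ^ c = -1} := by
    ext z
    constructor
    · rintro ⟨x, hxA, rfl⟩
      have hx1 : x ^ c = 1 := hxA
      show (u * x) ^ c = -1
      rw [mul_pow, hx1, huc]; ring
    · intro hz
      have hz1 : z ^ c = -1 := hz
      refine ⟨u⁻¹ * z, ?_, by field_simp⟩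
      show (u⁻¹ * z) ^ c = 1
      rw [mul_pow, inv_pow, huc, hz1]
      norm_num
  have hcardAB : ({x : F | x ^ c = 1}).ncard = ({x : F | x ^ c = -1}).ncard := by
    rw [← himg, Set.ncard_image_of_injective _ (mul_right_injective₀ hu0)]
  have hdisj : Disjoint {x : F | x ^ c = 1} {x : F | x ^ c = -1} := by
    rw [Set.disjoint_left]
    intro x hxA hxB
    exact hneg ((hxB.out.symm.trans hxA.out).symm ▸ rfl)
  have hunion : {x : F | x ^ c = 1} ∪ {x : F | x ^ c = -1} = {(0 : F)}ᶜ := by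
    ext x
    simp only [Set.mem_union, Set.mem_setOf_eq, Set.mem_compl_iff, Set.mem_singleton_iff]
    constructor
    · rintro (h | h) <;> intro h0 <;> rw [h0, zero_pow hcpos.ne'] at h
      · exact one_ne_zero h.symm
      · exact one_ne_zero (neg_eq_zero.mp h.symm)
    · exact fun hx => FiniteField.pow_dichotomy hchar hx
  have hcardU : ({(0 : F)}ᶜ : Set F).ncard = q - 1 := by
    have h1 : ({(0 : F)} : Set F).ncard = 1 := Set.ncard_singleton 0
    have h2 := Set.ncard_add_ncard_compl ({(0 : F)} : Set F)
    rw [h1, Nat.card_eq_fintype_card, hq] at h2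
    omega
  have hsum : ({x : F | x ^ c = 1}).ncard + ({x : F | x ^ c = -1}).ncard = q - 1 := by
    rw [← Set.ncard_union_eq hdisj, hunion, hcardU]
  omega
end

section
/- Let q be an odd prime power, q - 1 = n·m with m odd, gcd(m,n) = 1, n even, k = n/2, g a generator of F_q^*, and t the least positive residue of 2m⁻¹ mod k. Then the function f₁(x) = (1/2)(x^((k+t)m-1) - x^(km+1) + x^(tm-1) + x) on F_q satisfies: f₁(g^(ni+mj)) = g^(mj) if i ≡ 0 (mod m), f₁(g^(ni+mj)) = g^(ni+mj) if j is odd, and f₁(g^(ni+mj)) = g^(-ni+mj) if i ≢ 0 (mod m) and j is even (for integers 0 ≤ i ≤ m-1, 0 ≤ j ≤ n-1). -/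
theorem stmt16 {F : Type*} [Field F] [Fintype F] (q : ℕ)
    (hq : Fintype.card F = q) (hodd : Odd q)
    (m n k t : ℕ) (hnm : q - 1 = n * m) (hm : Odd m)
    (hgcd : Nat.gcd m n = 1) (hk : n = 2 * k)
    (ht1 : 1 ≤ t) (ht2 : t ≤ k) (ht : (t * m) % k = 2 % k)
    (g : Fˣ) (hg : ∀ x : Fˣ, x ∈ Subgroup.zpowers g)
    (f1 : F → F)
    (hf1 : ∀ x, f1 x = (1 / 2 : F) *
      (x ^ ((k + t) * m - 1) - x ^ (k * m + 1) + x ^ (t * m - 1) + x)) :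
    ∀ i j : ℕ, i ≤ m - 1 → j ≤ n - 1 →
      ((i = 0 → f1 ((g ^ (n * i + m * j) : Fˣ) : F) = ((g ^ (m * j) : Fˣ) : F)) ∧
       (Odd j → f1 ((g ^ (n * i + m * j) : Fˣ) : F) = ((g ^ (n * i + m * j) : Fˣ) : F)) ∧
       (i ≠ 0 → Even j →
         f1 ((g ^ (n * i + m * j) : Fˣ) : F) =
           ((g ^ (-(n * i : ℤ) + (m * j : ℤ)) : Fˣ) : F))) := by
  classical
  have hm1 : 0 < m := hm.pos
  have hq1 : 1 < q := by rw [← hq]; exact Fintype.one_lt_card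
  have hq3 : 3 ≤ q := by rcases hodd with ⟨l, hl⟩; omega
  have hn0 : 0 < n := by
    rcases Nat.eq_zero_or_pos n with h | h
    · subst h; simp at hnm; omega
    · exact h
  have hk0 : 0 < k := by omega
  have htm1 : 1 ≤ t * m := Nat.mul_pos (by omega) hm1
  -- 2 ≠ 0 in F
  have h2F : (2 : F) ≠ 0 := by
    intro h20
    have hc0 : ((q : ℕ) : F) = 0 := by rw [← hq]; exact FiniteField.cast_card_eq_zero F
    rcases hodd with ⟨l, hl⟩
    rw [hl] at hc0
    push_cast at hc0
    rw [h20] at hc0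
    simp at hc0
  have hy0 : (g : F) ≠ 0 := Units.ne_zero g
  -- order of g
  have ho : orderOf g = n * m := by
    rw [orderOf_eq_card_of_forall_mem_zpowers hg, Nat.card_eq_fintype_card,
      Fintype.card_units, hq, hnm]
  have honm : (g : F) ^ (n * m) = 1 := by
    have h := pow_orderOf_eq_one g
    rw [ho] at h
    calc (g : F) ^ (n * m) = ((g ^ (n * m) : Fˣ) : F) := by
          rw [Units.val_pow_eq_pow_val]
      _ = 1 := by rw [h, Units.val_one]
  -- congruence tool
  have hcong : ∀ a b : ℤ, ((n * m : ℕ) : ℤ) ∣ (a - b) → (g : F) ^ a = (g : F) ^ b := by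
    rintro a b ⟨c, hc⟩
    have ha : a = b + ((n * m : ℕ) : ℤ) * c := by linarith
    rw [ha, zpow_add₀ hy0, zpow_mul, zpow_natCast, honm, one_zpow, mul_one]
  -- g^(km) = -1
  have hykm : (g : F) ^ (k * m) = -1 := by
    have hsq : (g : F) ^ (k * m) * (g : F) ^ (k * m) = 1 := by
      rw [← pow_add]
      have : k * m + k * m = n * m := by rw [hk]; ring
      rw [this, honm]
    rcases mul_self_eq_one_iff.mp hsq with h | h
    · exfalso
      have h1 : (g : F) ^ (k * m) = ((g ^ (k * m) : Fˣ) : F) := by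
        rw [Units.val_pow_eq_pow_val]
      have h2 : (g ^ (k * m) : Fˣ) = 1 := Units.ext (by rw [← h1, h, Units.val_one])
      have hd := orderOf_dvd_of_pow_eq_one h2
      rw [ho] at hd
      have hle := Nat.le_of_dvd (Nat.mul_pos hk0 hm1) hd
      have hnm2 : n * m = 2 * (k * m) := by rw [hk]; ring
      nlinarith [Nat.mul_pos hk0 hm1]
    · exact h
  intro i j hi hj
  set e : ℕ := n * i + m * j with he
  set x : F := ((g ^ e : Fˣ) : F) with hx
  have hxy : x = (g : F) ^ e := by rw [hx, Units.val_pow_eq_pow_val]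
  -- parity of e matches parity of j
  obtain ⟨m', hm'⟩ := hm
  have hepar : e = 2 * (k * i + m' * j) + j := by rw [he, hk, hm']; ring
  have hxkm : x ^ (k * m) = (-1 : F) ^ j := by
    rw [hxy, ← pow_mul, mul_comm e (k * m), pow_mul, hykm, hepar, pow_add, pow_mul,
      neg_one_sq, one_pow, one_mul]
  -- expansions of the two large powers
  have hA : x ^ ((k + t) * m - 1) = (-1 : F) ^ j * x ^ (t * m - 1) := by
    have hsplit : (k + t) * m - 1 = k * m + (t * m - 1) := by
      have h1 : (k + t) * m = k * m + t * m := by ring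
      omega
    rw [hsplit, pow_add, hxkm]
  have hB : x ^ (k * m + 1) = (-1 : F) ^ j * x := by
    rw [pow_add, pow_one, hxkm]
  -- value of f1 x in each parity case
  have hoddcase : Odd j → f1 x = x := by
    intro hjodd
    rw [hf1, hA, hB, hjodd.neg_one_pow]
    field_simp
    ring
  have hevencase : Even j → f1 x = (g : F) ^ ((-(n * i : ℤ) + (m * j : ℤ))) := by
    intro hjeven
    obtain ⟨j', hj'⟩ := hjeven
    have hj2 : (-1 : F) ^ j = 1 := by
      rw [hj', ← two_mul, pow_mul, neg_one_sq, one_pow]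
    have hval : f1 x = x ^ (t * m - 1) := by
      rw [hf1, hA, hB, hj2]
      field_simp
      ring
    -- tm ≡ 2 mod k over ℤ
    have htZ : ((t * m : ℕ) : ℤ) % (k : ℤ) = ((2 : ℕ) : ℤ) % (k : ℤ) := by
      rw [← Int.natCast_mod, ← Int.natCast_mod, ht]
    have hdvd2 : (k : ℤ) ∣ ((t * m : ℕ) : ℤ) - ((2 : ℕ) : ℤ) := Int.ModEq.dvd (htZ.symm)
    obtain ⟨c, hc⟩ := hdvd2
    have hcZ : (t : ℤ) * m = (k : ℤ) * c + 2 := by push_cast at hc; linarith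
    have hxexp : x ^ (t * m - 1) = (g : F) ^ ((e : ℤ) * ((t : ℤ) * m - 1)) := by
      rw [hxy, ← pow_mul, ← zpow_natCast]
      congr 1
      push_cast [Nat.cast_sub htm1]
      ring
    rw [hval, hxexp]
    apply hcong
    refine ⟨(t : ℤ) * i + (j' : ℤ) * c, ?_⟩
    have hnZ : (n : ℤ) = 2 * k := by exact_mod_cast congrArg (fun a : ℕ => (a : ℤ)) hk
    have heZ : (e : ℤ) = (n : ℤ) * i + (m : ℤ) * j := by rw [he]; push_cast; ring
    have hjZ : (j : ℤ) = 2 * j' := by rw [hj']; push_cast; ring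
    push_cast
    rw [heZ, hnZ, hjZ]
    linear_combination ((2 : ℤ) * m * j') * hcZ
  refine ⟨?_, ?_, ?_⟩
  · intro hi0
    subst hi0
    rcases Nat.even_or_odd j with hje | hjo
    · rw [hevencase hje, Units.val_pow_eq_pow_val, ← zpow_natCast]
      congr 1
      push_cast
      ring
    · rw [hoddcase hjo, hxy, he, Units.val_pow_eq_pow_val]
      congr 1
      ring
  · intro hjo
    rw [hoddcase hjo]
  · intro _ hje
    rw [hevencase hje, Units.val_zpow_eq_zpow_val]
end
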